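/- With δ the operator (δg)(x) = x·g(x) − g'(x) and D the derivative, for g(x)=x and every n ≥ 2: D(δ^n g)(x) = H_n(x) + n·x·H_{n−1}(x) − n(n−1)·H_{n−2}(x). -/
import Mathlib


open Real MeasureTheory ProbabilityTheory Finset

noncomputable def Hpoly (n : ℕ) (x : ℝ) : ℝ :=
  (-1 : ℝ)^n * Real.exp (x^2/2) * iteratedDeriv n (fun y => Real.exp (-y^2/2)) x

noncomputable def stdGauss (x : ℝ) : ℝ := (Real.sqrt (2*Real.pi))⁻¹ * Real.exp (-x^2/2)

noncomputable def divOp (g : ℝ → ℝ) : ℝ → ℝ := fun x => x * g x - deriv g x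

def HasPolyGrowth (f : ℝ → ℝ) : Prop := ∃ C : ℝ, ∃ k : ℕ, ∀ x : ℝ, |f x| ≤ C * (1 + |x|)^k

open Polynomial in
lemma Hpoly_eq_aeval (n : ℕ) (x : ℝ) : Hpoly n x = aeval x (hermite n) := by
  have h : (fun y : ℝ => Real.exp (-y^2/2)) = (fun y : ℝ => Real.exp (-(y^2/2))) := by
    funext y; ring_nf
  rw [Hpoly, iteratedDeriv_eq_iterate, h,
    Polynomial.deriv_gaussian_eq_hermite_mul_gaussian]
  rw [show x^2/2 = -(-(x^2/2)) by ring, Real.exp_neg]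
  have := Real.exp_ne_zero (-(x^2/2))
  field_simp
  rcases Nat.even_or_odd n with he | ho
  · rw [he.neg_one_pow]; ring
  · rw [ho.neg_one_pow]; ring

open Polynomial in
lemma derivative_hermite (n : ℕ) :
    derivative (hermite (n+1)) = ((n : Polynomial ℤ) + 1) * hermite n := by
  induction n using Nat.twoStepInduction with
  | zero => simp [hermite_one, hermite_zero]
  | one =>
      simp only [hermite_succ, hermite_one, hermite_zero]
      simp
      ring
  | more m ih1 ih2 =>
      rw [show m+1+1+1 = (m+2)+1 from rfl, hermite_succ (m+2), derivative_sub,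
        derivative_mul, derivative_X, ih2, derivative_mul, ih1]
      simp only [derivative_add, derivative_natCast, derivative_one, add_zero,
        zero_add, zero_mul, one_mul]
      rw [hermite_succ (m+1), ih1]
      push_cast
      ring

open Polynomial in
lemma divOp_iter_id (n : ℕ) :
    divOp^[n] (fun y : ℝ => y) = fun x => aeval x (hermite (n+1)) := by
  induction n with
  | zero => simp [hermite_one]
  | succ k ih =>
      rw [Function.iterate_succ_apply', ih]
      funext x
      rw [divOp, Polynomial.deriv_aeval, hermite_succ (k+1), derivative_hermite]
      simp

theorem deriv_divergence_of_id (n : ℕ) (hn : 2 ≤ n) (x : ℝ) :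
    deriv (divOp^[n] (fun y : ℝ => y)) x
      = Hpoly n x + n * x * Hpoly (n-1) x - n * (n-1) * Hpoly (n-2) x := by
  open Polynomial in
  obtain ⟨m, rfl⟩ := Nat.exists_eq_add_of_le hn
  rw [divOp_iter_id, Polynomial.deriv_aeval, derivative_hermite]
  simp only [Hpoly_eq_aeval, show 2 + m - 1 = m + 1 by omega, show 2 + m - 2 = m by omega,
    show 2 + m = m + 2 by omega]
  have hrec : (aeval x (hermite (m+2)) : ℝ) = x * aeval x (hermite (m+1))
      - (m+1 : ℝ) * aeval x (hermite m) := by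
    rw [hermite_succ (m+1), derivative_hermite]
    simp
  simp only [map_mul, map_add, map_natCast, map_one]
  push_cast
  rw [hrec]
  ring
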